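/- arXiv:1107.1130 — 2 statements merged into one kernel-verified Lean document; each statement's English description precedes it below -/
import Mathlib

section
/- If g : {0,...,b-1} → {0,...,b-1} is a nondecreasing function (a digit map), extended to dismal numbers digitwise, then g(m ⊞ n) = g(m) ⊞ g(n) and g(m ⊠ n) = g(m) ⊠ g(n) for all dismal numbers m, n. -/
/-- The `i`-th base-`b` digit of `n`. -/
def digit (b n i : ℕ) : ℕ := n / b ^ i % b

/-- Dismal addition in base `b`: digitwise maximum of base-`b` digits. -/
def dadd (b m n : ℕ) : ℕ :=
  ∑ i ∈ Finset.range (m + n + 1), max (digit b m i) (digit b n i) * b ^ i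

/-- Dismal multiplication in base `b`: digit convolution with `min` as digit
product and `max` as digit sum (no carries). -/
def dmul (b m n : ℕ) : ℕ :=
  ∑ k ∈ Finset.range (m + n + 1),
    ((Finset.range (k + 1)).sup fun i => min (digit b m i) (digit b n (k - i))) * b ^ k

/-- The number of base-`b` digits of `n`. -/
def dlen (b n : ℕ) : ℕ := (Nat.digits b n).length

/-- Extension of a digit map `g` to a dismal number, applied digitwise. -/
def dmap (b : ℕ) (g : ℕ → ℕ) (n : ℕ) : ℕ :=
  ∑ i ∈ Finset.range (dlen b n), g (digit b n i) * b ^ i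

/-!
Both identities are checked digit by digit. A nondecreasing `g` commutes with `max` and `min` of
two digits and with the maximum of a nonempty finite family of digits, which is all that is needed
at any position where `g` is actually applied. The catch is that `dmap` applies `g` only to the
`dlen` significant digits and leaves leading zeros alone, although `g 0` may be nonzero. So one
also needs the lengths: `dlen (m ⊞ n) = max (dlen m) (dlen n)`, and position `k` of `m ⊠ n` is
significant exactly when some `i ≤ k` has `i < dlen m` and `k - i < dlen n`; on both sides the
`k`-th digit of the product is then the maximum over just those `i`.
-/

variable {b : ℕ}

theorem Finset.sup_eq_sup_filter {α ι : Type*} [SemilatticeSup α] [OrderBot α] {s : Finset ι}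
    (p : ι → Prop) [DecidablePred p] {f : ι → α} (h : ∀ i ∈ s, ¬ p i → f i = ⊥) :
    s.sup f = (s.filter p).sup f := by
  refine le_antisymm (Finset.sup_le fun i hi => ?_) (Finset.sup_mono (Finset.filter_subset p s))
  by_cases hp : p i
  · exact Finset.le_sup (Finset.mem_filter.2 ⟨hi, hp⟩)
  · simp [h i hi hp]

theorem MonotoneOn.map_finset_sup {α β ι : Type*} [LinearOrder α] [OrderBot α]
    [SemilatticeSup β] [OrderBot β] {g : α → β} {t : Set α} (hg : MonotoneOn g t)
    {s : Finset ι} (hs : s.Nonempty) {f : ι → α} (hf : ∀ i ∈ s, f i ∈ t) :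
    g (s.sup f) = s.sup (g ∘ f) := by
  obtain ⟨i, hi, hsup⟩ := Finset.exists_mem_eq_sup s hs f
  rw [hsup]
  exact le_antisymm (Finset.le_sup (f := g ∘ f) hi)
    (Finset.sup_le fun j hj => hg (hf j hj) (hf i hi) (hsup ▸ Finset.le_sup hj))

lemma digit_lt (hb : 0 < b) (n i : ℕ) : digit b n i < b :=
  Nat.mod_lt _ hb

lemma digit_succ (n i : ℕ) : digit b n (i + 1) = digit b (n / b) i := by
  simp [digit, pow_succ, Nat.div_div_eq_div_mul, mul_comm]

lemma digit_eq_zero_of_lt_pow {n i : ℕ} (h : n < b ^ i) : digit b n i = 0 := by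
  simp [digit, Nat.div_eq_of_lt h]

lemma digit_eq_zero_of_le (hb : 1 < b) {n i : ℕ} (h : n ≤ i) : digit b n i = 0 :=
  digit_eq_zero_of_lt_pow ((Nat.lt_pow_self hb).trans_le (Nat.pow_le_pow_right (by omega) h))

lemma digit_eq_zero_of_dlen_le (hb : 1 < b) {n i : ℕ} (h : dlen b n ≤ i) : digit b n i = 0 :=
  digit_eq_zero_of_lt_pow ((Nat.digits_length_le_iff hb n).1 h)

lemma digit_dlen_sub_one_ne_zero (hb : 1 < b) {n : ℕ} (hn : n ≠ 0) :
    digit b n (dlen b n - 1) ≠ 0 := by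
  have hlen : 0 < dlen b n := List.length_pos_iff.2 (Nat.digits_ne_nil_iff_ne_zero.2 hn)
  have hlow : b ^ (dlen b n - 1) ≤ n :=
    (Nat.lt_digits_length_iff hb n).1 (Nat.sub_lt hlen one_pos)
  have hhigh : n < b ^ (dlen b n - 1) * b := by
    rw [← pow_succ, Nat.sub_add_cancel hlen]
    exact Nat.lt_base_pow_length_digits hb
  rw [digit, Nat.mod_eq_of_lt (Nat.div_lt_of_lt_mul hhigh)]
  exact (Nat.div_pos hlow (by positivity)).ne'

lemma lt_dlen_iff (hb : 1 < b) {n k : ℕ} :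
    k < dlen b n ↔ ∃ j, k ≤ j ∧ digit b n j ≠ 0 := by
  constructor
  · intro h
    refine ⟨dlen b n - 1, by omega, digit_dlen_sub_one_ne_zero hb ?_⟩
    rintro rfl
    simp [dlen] at h
  · rintro ⟨j, hkj, hj⟩
    by_contra! h
    exact hj (digit_eq_zero_of_dlen_le hb (h.trans hkj))

lemma eq_of_digit_eq (hb : 1 < b) {x y : ℕ} (h : ∀ i, digit b x i = digit b y i) : x = y := by
  have hlen : dlen b x = dlen b y :=
    eq_of_forall_lt_iff fun k => by simp only [lt_dlen_iff hb, h]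
  refine Nat.digits.injective b (List.ext_getElem hlen fun i hx hy => ?_)
  rw [← List.getD_eq_getElem _ 0 hx, ← List.getD_eq_getElem _ 0 hy, Nat.getD_digits _ _ hb,
    Nat.getD_digits _ _ hb]
  exact h i

lemma digit_sum_mul_pow (hb : 0 < b) {c : ℕ → ℕ} (hc : ∀ i, c i < b) (N j : ℕ) :
    digit b (∑ i ∈ Finset.range N, c i * b ^ i) j = if j < N then c j else 0 := by
  induction N generalizing c j with
  | zero => simp [digit]
  | succ N ih =>
    have hsum : ∑ i ∈ Finset.range (N + 1), c i * b ^ i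
        = c 0 + b * ∑ i ∈ Finset.range N, c (i + 1) * b ^ i := by
      rw [Finset.sum_range_succ', Finset.mul_sum, add_comm]
      simp only [pow_succ, pow_zero, mul_one]
      congr 1
      exact Finset.sum_congr rfl fun i _ => by ring
    rw [hsum]
    cases j with
    | zero => simp [digit, Nat.mod_eq_of_lt (hc 0)]
    | succ j =>
      rw [digit_succ, Nat.add_mul_div_left _ _ hb, Nat.div_eq_of_lt (hc 0), zero_add,
        ih fun i => hc (i + 1)]
      simp

lemma digit_dadd (hb : 1 < b) (m n j : ℕ) :
    digit b (dadd b m n) j = max (digit b m j) (digit b n j) := by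
  rw [dadd, digit_sum_mul_pow (by omega) fun i => max_lt (digit_lt (by omega) m i)
    (digit_lt (by omega) n i)]
  split_ifs with hj
  · rfl
  · rw [digit_eq_zero_of_le hb (by omega : m ≤ j), digit_eq_zero_of_le hb (by omega : n ≤ j),
      max_self]

lemma digit_dmul (hb : 1 < b) (m n k : ℕ) :
    digit b (dmul b m n) k
      = (Finset.range (k + 1)).sup fun i => min (digit b m i) (digit b n (k - i)) := by
  have hlt : ∀ k,
      ((Finset.range (k + 1)).sup fun i => min (digit b m i) (digit b n (k - i))) < b :=
    fun k => (Finset.sup_lt_iff (by simp; omega)).2 fun i _ =>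
      (min_le_left _ _).trans_lt (digit_lt (by omega) m i)
  rw [dmul, digit_sum_mul_pow (by omega) hlt]
  split_ifs with hk
  · rfl
  · refine ((Finset.sup_eq_bot_iff _ _).2 fun i hi => ?_).symm
    rcases Nat.lt_or_ge i m with him | him
    · simp [digit_eq_zero_of_le hb (by omega : n ≤ k - i)]
    · simp [digit_eq_zero_of_le hb him]

lemma digit_dmap (hb : 0 < b) {g : ℕ → ℕ} (hg : ∀ i, i < b → g i < b) (x j : ℕ) :
    digit b (dmap b g x) j = if j < dlen b x then g (digit b x j) else 0 :=
  digit_sum_mul_pow hb (fun i => hg _ (digit_lt hb x i)) _ j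

lemma dlen_dadd (hb : 1 < b) (m n : ℕ) :
    dlen b (dadd b m n) = max (dlen b m) (dlen b n) :=
  eq_of_forall_lt_iff fun k => by
    simp only [lt_max_iff, lt_dlen_iff hb, digit_dadd hb, ne_eq, Nat.max_eq_zero_iff, not_and_or,
      and_or_left, exists_or]

lemma lt_dlen_dmul_iff (hb : 1 < b) {m n k : ℕ} :
    k < dlen b (dmul b m n) ↔ ∃ i ≤ k, i < dlen b m ∧ k - i < dlen b n := by
  rw [lt_dlen_iff hb]
  simp only [digit_dmul hb]
  constructor
  · rintro ⟨j, hkj, hj⟩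
    obtain ⟨i, hi, hmin⟩ :
        ∃ i ∈ Finset.range (j + 1), min (digit b m i) (digit b n (j - i)) ≠ 0 := by
      simpa [Finset.sup_eq_bot_iff] using hj
    have him : i < dlen b m := by
      by_contra! h
      simp [digit_eq_zero_of_dlen_le hb h] at hmin
    have hin : j - i < dlen b n := by
      by_contra! h
      simp [digit_eq_zero_of_dlen_le hb h] at hmin
    exact ⟨min k (dlen b m - 1), by omega, by omega, by omega⟩
  · rintro ⟨i, hik, him, hin⟩
    have hm : m ≠ 0 := by rintro rfl; simp [dlen] at him
    have hn : n ≠ 0 := by rintro rfl; simp [dlen] at hin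
    refine ⟨dlen b m - 1 + (dlen b n - 1), by omega, ?_⟩
    rw [← Nat.pos_iff_ne_zero, Finset.lt_sup_iff]
    refine ⟨dlen b m - 1, Finset.mem_range.2 (by omega), ?_⟩
    rw [Nat.add_sub_cancel_left]
    exact lt_min (Nat.pos_of_ne_zero (digit_dlen_sub_one_ne_zero hb hm))
      (Nat.pos_of_ne_zero (digit_dlen_sub_one_ne_zero hb hn))

lemma digit_dmul_eq_sup_filter (hb : 1 < b) (m n k : ℕ) :
    digit b (dmul b m n) k =
      ((Finset.range (k + 1)).filter fun i => i < dlen b m ∧ k - i < dlen b n).sup fun i =>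
        min (digit b m i) (digit b n (k - i)) := by
  rw [digit_dmul hb, Finset.sup_eq_sup_filter (fun i => i < dlen b m ∧ k - i < dlen b n)]
  intro i _ hi
  rcases not_and_or.1 hi with hi | hi <;> simp [digit_eq_zero_of_dlen_le hb (not_lt.1 hi)]

theorem dmap_dadd (hb : 1 < b) {g : ℕ → ℕ} (hg : ∀ i, i < b → g i < b)
    (hmono : MonotoneOn g (Set.Iio b)) (m n : ℕ) :
    dmap b g (dadd b m n) = dadd b (dmap b g m) (dmap b g n) := by
  refine eq_of_digit_eq hb fun j => ?_
  simp only [digit_dmap (by omega : 0 < b) hg, digit_dadd hb, dlen_dadd hb, lt_max_iff]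
  have hmj : digit b m j ∈ Set.Iio b := digit_lt (by omega) m j
  have hnj : digit b n j ∈ Set.Iio b := digit_lt (by omega) n j
  by_cases hjm : j < dlen b m <;> by_cases hjn : j < dlen b n
  · simp [hjm, hjn, hmono.map_max hmj hnj]
  · simp [hjm, hjn, digit_eq_zero_of_dlen_le hb (not_lt.1 hjn)]
  · simp [hjm, hjn, digit_eq_zero_of_dlen_le hb (not_lt.1 hjm)]
  · simp [hjm, hjn]

lemma digit_dmul_dmap (hb : 1 < b) {g : ℕ → ℕ} (hg : ∀ i, i < b → g i < b)
    (hmono : MonotoneOn g (Set.Iio b)) (m n k : ℕ) :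
    digit b (dmul b (dmap b g m) (dmap b g n)) k =
      ((Finset.range (k + 1)).filter fun i => i < dlen b m ∧ k - i < dlen b n).sup
        fun i => g (min (digit b m i) (digit b n (k - i))) := by
  have hb0 : 0 < b := by omega
  rw [digit_dmul hb, Finset.sup_eq_sup_filter (fun i => i < dlen b m ∧ k - i < dlen b n)]
  · refine Finset.sup_congr rfl fun i hi => ?_
    obtain ⟨him, hin⟩ := (Finset.mem_filter.1 hi).2
    simp [digit_dmap hb0 hg, him, hin,
      hmono.map_min (digit_lt hb0 m i) (digit_lt hb0 n (k - i))]
  · intro i _ hi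
    rcases not_and_or.1 hi with hi | hi <;> simp [digit_dmap hb0 hg, hi]

theorem dmap_dmul (hb : 1 < b) {g : ℕ → ℕ} (hg : ∀ i, i < b → g i < b)
    (hmono : MonotoneOn g (Set.Iio b)) (m n : ℕ) :
    dmap b g (dmul b m n) = dmul b (dmap b g m) (dmap b g n) := by
  refine eq_of_digit_eq hb fun k => ?_
  rw [digit_dmap (by omega) hg, digit_dmul_dmap hb hg hmono, digit_dmul_eq_sup_filter hb]
  split_ifs with hk
  · obtain ⟨i, hik, hi⟩ := (lt_dlen_dmul_iff hb).1 hk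
    exact hmono.map_finset_sup ⟨i, Finset.mem_filter.2 ⟨Finset.mem_range.2 (by omega), hi⟩⟩
      fun i _ => (min_le_left _ _).trans_lt (digit_lt (by omega) m i)
  · rw [Finset.filter_eq_empty_iff.2 fun i hi hP =>
      hk ((lt_dlen_dmul_iff hb).2 ⟨i, Nat.lt_succ_iff.1 (Finset.mem_range.1 hi), hP⟩),
      Finset.sup_empty]
    rfl

/-- a nondecreasing digit map commutes with dismal addition and
dismal multiplication. -/
theorem dismal_digit_map (b : ℕ) (hb : 2 ≤ b) (g : ℕ → ℕ)
    (hrange : ∀ i, i < b → g i < b)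
    (hmono : ∀ i j, i ≤ j → j < b → g i ≤ g j) (m n : ℕ) :
    dmap b g (dadd b m n) = dadd b (dmap b g m) (dmap b g n) ∧
    dmap b g (dmul b m n) = dmul b (dmap b g m) (dmap b g n) := by
  have hmono' : MonotoneOn g (Set.Iio b) := fun i _ j hj hij => hmono i j hij hj
  exact ⟨dmap_dadd hb hrange hmono' m n, dmap_dmul hb hrange hmono' m n⟩
end

section
/- For every base b ≥ 2 and k ≥ 1, the number of base-b dismal divisors of the repunit (b^k−1)/(b−1) satisfies (b^k − 1)/k ≤ d_b((b^k−1)/(b−1)) ≤ (b−1)·b^{k−1}. -/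
/-- `p` dismally divides `n` in base `b`. -/
def DDvd (b p n : ℕ) : Prop := ∃ q, dmul b p q = n

open scoped Classical in
/-- The finite set of dismal divisors of `n` (every dismal divisor of a
nonzero `n` has at most `dlen b n` digits). -/
noncomputable def ddivisors (b n : ℕ) : Finset ℕ :=
  (Finset.range (b ^ dlen b n)).filter fun p => DDvd b p n

/-- The dismal sum of a finite set of numbers: digitwise supremum. -/
def ddigitSum (b : ℕ) (S : Finset ℕ) : ℕ :=
  ∑ i ∈ Finset.range (S.sup id + 1), (S.sup fun p => digit b p i) * b ^ i

/-- The number of dismal divisors of `n` in base `b`. -/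
noncomputable def dnum (b n : ℕ) : ℕ := (ddivisors b n).card

/-!
A dismal divisor of the repunit `R_k` has at most `k` digits and a nonzero last digit, which
gives the upper bound. For the lower bound, view a nonzero `n < b ^ k` as a cyclic word of `k`
digits and let `N` be the least length such that every cyclic window of `N` digits contains a
nonzero digit. By minimality some cyclic run of `N - 1` zeros exists; rotating `n` so that this
run occupies the top `N - 1` positions gives `p` with `p ⊠ R_N = R_k`, since every window of `N`
consecutive positions ending below `k` meets a nonzero digit of `p` and no window ending at or
above `k` does. So each of the `b ^ k - 1` nonzero `n < b ^ k` is a rotation of one of the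
`d_b(R_k)` divisors, and each divisor has at most `k` rotations.
-/

namespace Dismal

open Finset

variable {b : ℕ}

theorem digit_lt (hb : 2 ≤ b) (n i : ℕ) : digit b n i < b :=
  Nat.mod_lt _ (by omega)

theorem digit_eq_zero_of_lt_pow {n i : ℕ} (h : n < b ^ i) : digit b n i = 0 := by
  simp [digit, Nat.div_eq_of_lt h]

theorem digit_eq_zero_of_le (hb : 2 ≤ b) {n i : ℕ} (h : n ≤ i) : digit b n i = 0 :=
  digit_eq_zero_of_lt_pow <|
    (Nat.lt_pow_self (by omega)).trans_le (Nat.pow_le_pow_right (by omega) h)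

theorem digit_zero (n : ℕ) : digit b n 0 = n % b := by
  simp [digit]

theorem mod_pow_eq_sum_digit (n K : ℕ) :
    n % b ^ K = ∑ j ∈ range K, digit b n j * b ^ j := by
  induction K with
  | zero => simp [Nat.mod_one]
  | succ K ih => rw [sum_range_succ, ← ih, pow_succ, Nat.mod_mul, digit]; ring

theorem eq_of_digit_eq (hb : 2 ≤ b) {m n : ℕ} (h : ∀ i, digit b m i = digit b n i) :
    m = n := by
  obtain ⟨K, hm, hn⟩ : ∃ K, m < b ^ K ∧ n < b ^ K :=
    ⟨m + n, (Nat.lt_pow_self (by omega)).trans_le (Nat.pow_le_pow_right (by omega) (by omega)),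
      (Nat.lt_pow_self (by omega)).trans_le (Nat.pow_le_pow_right (by omega) (by omega))⟩
  rw [← Nat.mod_eq_of_lt hm, ← Nat.mod_eq_of_lt hn, mod_pow_eq_sum_digit, mod_pow_eq_sum_digit]
  simp_rw [h]

theorem sum_mul_pow_lt {c : ℕ → ℕ} (hc : ∀ i, c i < b) (K : ℕ) :
    ∑ i ∈ range K, c i * b ^ i < b ^ K := by
  have hb := hc 0
  induction K with
  | zero => simp
  | succ K ih =>
    have hcK : c K * b ^ K ≤ (b - 1) * b ^ K := Nat.mul_le_mul_right _ (by have := hc K; omega)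
    have hpow : b ^ (K + 1) = (b - 1) * b ^ K + b ^ K := by
      rw [pow_succ, mul_comm, ← Nat.succ_mul, Nat.succ_eq_add_one, Nat.sub_add_cancel (by omega)]
    rw [sum_range_succ, hpow]
    omega

theorem digit_add_mul_zero {a : ℕ} (ha : a < b) (m : ℕ) : digit b (a + b * m) 0 = a := by
  simp [digit, Nat.add_mul_mod_self_left, Nat.mod_eq_of_lt ha]

theorem digit_add_mul_succ {a : ℕ} (ha : a < b) (m j : ℕ) :
    digit b (a + b * m) (j + 1) = digit b m j := by
  rw [digit, digit, pow_succ', ← Nat.div_div_eq_div_mul, Nat.add_mul_div_left _ _ (by omega),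
    Nat.div_eq_of_lt ha, zero_add]

theorem digit_sum_mul_pow {c : ℕ → ℕ} (hc : ∀ i, c i < b) (K j : ℕ) :
    digit b (∑ i ∈ range K, c i * b ^ i) j = if j < K then c j else 0 := by
  induction K generalizing c j with
  | zero => simp [digit]
  | succ K ih =>
    have hsplit : ∑ i ∈ range (K + 1), c i * b ^ i =
        c 0 + b * ∑ i ∈ range K, c (i + 1) * b ^ i := by
      rw [sum_range_succ', mul_sum]
      simp only [pow_succ, pow_zero, mul_one]
      rw [add_comm]
      congr 1
      exact sum_congr rfl fun i _ => by ring
    rw [hsplit]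
    cases j with
    | zero => simp [digit_add_mul_zero (hc 0)]
    | succ j => simp [digit_add_mul_succ (hc 0), ih (fun i => hc (i + 1))]

theorem digit_dmul (hb : 2 ≤ b) (m n j : ℕ) :
    digit b (dmul b m n) j =
      (range (j + 1)).sup fun i => min (digit b m i) (digit b n (j - i)) := by
  have hlt : ∀ t, ((range (t + 1)).sup fun i => min (digit b m i) (digit b n (t - i))) < b :=
    fun t => (Finset.sup_lt_iff (by rw [Nat.bot_eq_zero]; omega)).2 fun i _ =>
      (min_le_left _ _).trans_lt (digit_lt hb m i)
  rw [dmul, digit_sum_mul_pow hlt]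
  split_ifs with hj
  · rfl
  · refine (Nat.eq_zero_of_le_zero (Finset.sup_le fun i hi => ?_)).symm
    rcases le_or_gt m i with hm | hm
    · simp [digit_eq_zero_of_le hb hm]
    · simp [digit_eq_zero_of_le hb (show n ≤ j - i by omega)]

theorem digit_dmul_zero (hb : 2 ≤ b) (m n : ℕ) :
    digit b (dmul b m n) 0 = min (digit b m 0) (digit b n 0) := by
  simp [digit_dmul hb]

def repunit (b k : ℕ) : ℕ := ∑ i ∈ range k, b ^ i

theorem digit_repunit (hb : 2 ≤ b) (k j : ℕ) :
    digit b (repunit b k) j = if j < k then 1 else 0 := by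
  simpa [repunit] using digit_sum_mul_pow (c := fun _ => 1) (fun _ => by omega) k j

theorem repunit_lt (hb : 2 ≤ b) (k : ℕ) : repunit b k < b ^ k := by
  simpa [repunit] using sum_mul_pow_lt (c := fun _ => 1) (fun _ => by omega) k

theorem pow_pred_le_repunit {k : ℕ} (hk : 1 ≤ k) : b ^ (k - 1) ≤ repunit b k :=
  single_le_sum (f := (b ^ ·)) (fun _ _ => Nat.zero_le _) (mem_range.2 (by omega))

theorem dlen_repunit (hb : 2 ≤ b) {k : ℕ} (hk : 1 ≤ k) : dlen b (repunit b k) = k := by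
  have hle := (Nat.digits_length_le_iff (by omega) _).2 (repunit_lt hb k)
  have hgt := (Nat.lt_digits_length_iff (by omega) _).2 (pow_pred_le_repunit (b := b) hk)
  rw [dlen]
  omega

theorem digit_dmul_repunit (hb : 2 ≤ b) (p N j : ℕ) :
    digit b (dmul b p (repunit b N)) j =
      if ∃ i ≤ j, j < i + N ∧ digit b p i ≠ 0 then 1 else 0 := by
  rw [digit_dmul hb]
  simp only [digit_repunit hb]
  split_ifs with h
  · obtain ⟨i, hij, hjN, hi⟩ := h
    refine le_antisymm
      (Finset.sup_le fun i _ => (min_le_right _ _).trans (by split_ifs <;> omega)) ?_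
    refine le_trans ?_ (le_sup (f := fun i => min (digit b p i) (if j - i < N then 1 else 0))
      (mem_range.2 (Nat.lt_succ_of_le hij)))
    simp only [if_pos (show j - i < N by omega)]
    omega
  · push Not at h
    refine Nat.eq_zero_of_le_zero (Finset.sup_le fun i hi => ?_)
    have hij : i ≤ j := Nat.le_of_lt_succ (mem_range.1 hi)
    split_ifs with hN
    · simp [h i hij (by omega)]
    · simp

theorem mem_ddivisors {p n : ℕ} : p ∈ ddivisors b n ↔ p < b ^ dlen b n ∧ DDvd b p n := by
  simp only [ddivisors, mem_filter, mem_range]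

theorem dnum_le (hb : 2 ≤ b) {n : ℕ} (hn : digit b n 0 ≠ 0) :
    dnum b n ≤ (b - 1) * b ^ (dlen b n - 1) := by
  set L := dlen b n
  have hL : b ^ L = b ^ (L - 1) * b := by
    have : L ≠ 0 := by
      rintro h
      simp [Nat.digits_eq_nil_iff_eq_zero.1 (List.length_eq_zero_iff.1 h), digit] at hn
    rw [← pow_succ, Nat.sub_add_cancel (by omega)]
  have hsub :
      ddivisors b n ⊆ (range (b ^ (L - 1)) ×ˢ Ico 1 b).image fun x => x.2 + b * x.1 := by
    intro p hp
    obtain ⟨hpL, q, rfl⟩ := mem_ddivisors.1 hp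
    have hp0 : p % b ≠ 0 := by
      rw [digit_dmul_zero hb] at hn
      rw [← digit_zero]
      omega
    refine mem_image.2 ⟨(p / b, p % b),
      mem_product.2 ⟨mem_range.2 ?_, mem_Ico.2 ⟨?_, ?_⟩⟩, Nat.mod_add_div p b⟩
    · rw [hL] at hpL
      exact Nat.div_lt_of_lt_mul (by rwa [mul_comm] at hpL)
    · omega
    · exact Nat.mod_lt _ (by omega)
  calc dnum b n ≤ _ := card_le_card hsub
    _ ≤ _ := card_image_le
    _ = (b - 1) * b ^ (L - 1) := by simp [mul_comm]

def rotate (b k s n : ℕ) : ℕ := ∑ j ∈ range k, digit b n ((j + s) % k) * b ^ j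

theorem digit_rotate (hb : 2 ≤ b) (k s n j : ℕ) :
    digit b (rotate b k s n) j = if j < k then digit b n ((j + s) % k) else 0 :=
  digit_sum_mul_pow (fun _ => digit_lt hb _ _) k j

theorem rotate_lt (hb : 2 ≤ b) (k s n : ℕ) : rotate b k s n < b ^ k :=
  sum_mul_pow_lt (fun _ => digit_lt hb _ _) k

theorem rotate_rotate_of_dvd (hb : 2 ≤ b) {k s t n : ℕ} (hn : n < b ^ k) (hst : k ∣ s + t) :
    rotate b k t (rotate b k s n) = n := by
  refine eq_of_digit_eq hb fun j => ?_
  rw [digit_rotate hb]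
  split_ifs with hj
  · rw [digit_rotate hb, if_pos (Nat.mod_lt _ (by omega)), Nat.mod_add_mod, add_assoc,
      add_comm t, Nat.add_mod, Nat.mod_eq_zero_of_dvd hst, add_zero, Nat.mod_mod,
      Nat.mod_eq_of_lt hj]
  · exact (digit_eq_zero_of_lt_pow (hn.trans_le (Nat.pow_le_pow_right (by omega) (by omega)))).symm

theorem exists_lt_dvd_add {k : ℕ} (hk : 0 < k) (s : ℕ) : ∃ t < k, k ∣ s + t := by
  have hdiv := Nat.div_add_mod s k
  have hmod := Nat.mod_lt s hk
  refine ⟨(k - s % k) % k, Nat.mod_lt _ hk, Nat.dvd_of_mod_eq_zero ?_⟩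
  rw [Nat.add_mod_mod, show s + (k - s % k) = k * (s / k + 1) by rw [mul_add]; omega,
    Nat.mul_mod_right]

theorem exists_digit_ne_zero {n k : ℕ} (hn0 : n ≠ 0) (hn : n < b ^ k) :
    ∃ i < k, digit b n i ≠ 0 := by
  by_contra! h
  rw [← Nat.mod_eq_of_lt hn, mod_pow_eq_sum_digit,
    sum_eq_zero fun i hi => by rw [h i (mem_range.1 hi), zero_mul]] at hn0
  exact hn0 rfl

theorem exists_cyclic_window_digit_ne_zero {n k : ℕ} (hn0 : n ≠ 0) (hn : n < b ^ k) :
    ∃ N, ∀ a, ∃ j < N, digit b n ((a + j) % k) ≠ 0 := by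
  obtain ⟨i₀, hi₀k, hi₀⟩ := exists_digit_ne_zero hn0 hn
  refine ⟨k + i₀, fun a => ?_⟩
  obtain ⟨t, htk, hat⟩ := exists_lt_dvd_add (show 0 < k by omega) a
  refine ⟨t + i₀, by omega, ?_⟩
  rwa [← add_assoc, Nat.add_mod, Nat.mod_eq_zero_of_dvd hat, zero_add, Nat.mod_mod,
    Nat.mod_eq_of_lt hi₀k]

theorem exists_rotate_dmul_repunit (hb : 2 ≤ b) {n k : ℕ} (hn0 : n ≠ 0) (hn : n < b ^ k) :
    ∃ s N, dmul b (rotate b k s n) (repunit b N) = repunit b k := by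
  classical
  have hcover := exists_cyclic_window_digit_ne_zero hn0 hn
  set N := Nat.find hcover
  have hN : ∀ a, ∃ j < N, digit b n ((a + j) % k) ≠ 0 := Nat.find_spec hcover
  have hN0 : 0 < N := by
    obtain ⟨j, hj, -⟩ := hN 0
    omega
  obtain ⟨c, hc⟩ : ∃ c, ∀ j < N - 1, digit b n ((c + j) % k) = 0 := by
    simpa using Nat.find_min hcover (show N - 1 < N by omega)
  have hcN : digit b n ((c + (N - 1)) % k) ≠ 0 := by
    obtain ⟨j, hj, hd⟩ := hN c
    obtain rfl : j = N - 1 := by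
      by_contra hne
      exact hd (hc j (by omega))
    exact hd
  refine ⟨c + (N - 1), N, eq_of_digit_eq hb fun j => ?_⟩
  rw [digit_dmul_repunit hb, digit_repunit hb]
  refine if_congr ⟨fun ⟨i, hij, hjN, hi⟩ => ?_, fun hjk => ?_⟩ rfl rfl
  · rw [digit_rotate hb] at hi
    split_ifs at hi with hik
    · by_contra hjk
      rw [show i + (c + (N - 1)) = c + (i + N - 1 - k) + k by omega, Nat.add_mod_right] at hi
      exact hi (hc _ (by omega))
    · exact absurd rfl hi
  · by_cases hjN : j + 1 < N
    · refine ⟨0, Nat.zero_le _, by omega, ?_⟩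
      rwa [digit_rotate hb, if_pos (by omega), zero_add]
    · obtain ⟨m, hm, hd⟩ := hN (j + 1 - N + (c + (N - 1)))
      refine ⟨j + 1 - N + m, by omega, by omega, ?_⟩
      rwa [digit_rotate hb, if_pos (by omega), add_right_comm]

theorem pow_sub_one_le_mul_dnum_repunit (hb : 2 ≤ b) {k : ℕ} (hk : 1 ≤ k) :
    b ^ k - 1 ≤ k * dnum b (repunit b k) := by
  classical
  have hcover : Ico 1 (b ^ k) ⊆
      (ddivisors b (repunit b k)).biUnion fun p => (range k).image fun t => rotate b k t p := by
    intro n hn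
    obtain ⟨hn0, hn⟩ := mem_Ico.1 hn
    obtain ⟨s, N, hs⟩ := exists_rotate_dmul_repunit hb (by omega) hn
    obtain ⟨t, ht, hst⟩ := exists_lt_dvd_add (show 0 < k by omega) s
    refine mem_biUnion.2 ⟨rotate b k s n, ?_, mem_image.2 ⟨t, mem_range.2 ht, ?_⟩⟩
    · rw [mem_ddivisors, dlen_repunit hb hk]
      exact ⟨rotate_lt hb k s n, _, hs⟩
    · exact rotate_rotate_of_dvd hb hn hst
  calc b ^ k - 1 = #(Ico 1 (b ^ k)) := by simp
    _ ≤ _ := card_le_card hcover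
    _ ≤ dnum b (repunit b k) * k :=
      card_biUnion_le_card_mul _ _ _ fun p _ => card_image_le.trans (card_range k).le
    _ = k * dnum b (repunit b k) := mul_comm _ _

end Dismal

open Dismal

/-- bounds on the number of base-`b` dismal divisors of the
repunit `(b^k - 1)/(b - 1)`: `(b^k - 1)/k ≤ d_b ≤ (b-1)·b^(k-1)`. -/
theorem dismal_divisors_repunit_bounds (b : ℕ) (hb : 2 ≤ b) (k : ℕ) (hk : 1 ≤ k) :
    b ^ k - 1 ≤ k * dnum b ((b ^ k - 1) / (b - 1)) ∧
    dnum b ((b ^ k - 1) / (b - 1)) ≤ (b - 1) * b ^ (k - 1) := by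
  rw [← Nat.geomSum_eq hb, ← repunit]
  refine ⟨pow_sub_one_le_mul_dnum_repunit hb hk, ?_⟩
  have hlast : digit b (repunit b k) 0 ≠ 0 := by
    rw [digit_repunit hb, if_pos (by omega)]
    exact one_ne_zero
  simpa [dlen_repunit hb hk] using dnum_le hb hlast
end
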